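/- Let τ be a finite Wang tileset admitting a tiling of the plane in which some row is horizontally periodic with period p > 0 (i.e. f(i+p,j₀) = f(i,j₀) for all i) and in which the row at height j₀ equals the row at height j₀ + m for some m > 0. Then τ admits a fully periodic tiling of the plane. -/

import Mathlib

/-!
Since rows `j₀` and `j₀ + m` coincide, repeating the strip of rows `j₀, …, j₀ + m - 1` gives a
tiling that is vertically `m`-periodic. Its columns are then determined by finitely many tiles of
`τ`, so by pigeonhole two columns `a < a + q` coincide, and repeating the columns
`a, …, a + q - 1` gives a tiling with periods `q` and `m`, hence with common period `q * m`.
-/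

structure WangTile (C : Type) where
  e : C
  w : C
  n : C
  s : C
deriving DecidableEq

def IsTiling {C : Type} (τ : Set (WangTile C)) (f : ℤ → ℤ → WangTile C) : Prop :=
  (∀ i j, f i j ∈ τ) ∧ (∀ i j, (f i j).e = (f (i+1) j).w) ∧
    (∀ i j, (f i j).n = (f i (j+1)).s)

theorem rel_toIcoMod_add_one {α : Type*} (R : α → α → Prop) (u : ℤ → α)
    (hR : ∀ i, R (u i) (u (i + 1))) {p : ℤ} (hp : 0 < p) {a : ℤ} (hu : u (a + p) = u a)
    (i : ℤ) : R (u (toIcoMod hp a i)) (u (toIcoMod hp a (i + 1))) := by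
  have hsucc : toIcoMod hp a (i + 1) = toIcoMod hp a (toIcoMod hp a i + 1) := by
    rw [toIcoMod_add_right_eq_add, ← toIcoMod_toIcoMod hp _ a, ← toIcoMod_add_right_eq_add]
  obtain ⟨hak, hkp⟩ := toIcoMod_mem_Ico hp a i
  set k := toIcoMod hp a i
  rcases (show k + 1 < a + p ∨ k + 1 = a + p by omega) with hlt | hseam
  · rw [hsucc, (toIcoMod_eq_self hp).2 ⟨by omega, hlt⟩]
    exact hR k
  · rw [hsucc, hseam, toIcoMod_apply_right, ← hu, ← hseam]
    exact hR k

theorem exists_add_eq_of_periodic {α : Type*} {s : Set α} (hs : s.Finite) {f : ℤ → ℤ → α}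
    (hfs : ∀ i j, f i j ∈ s) {m : ℤ} (hm : 0 < m) (hf : ∀ i, Function.Periodic (f i) m) :
    ∃ a q, 0 < q ∧ f (a + q) = f a := by
  have : Finite s := hs.to_subtype
  have : Finite (Set.Ico 0 m) := (Set.finite_Ico 0 m).to_subtype
  obtain ⟨a, b, hab, hrestr⟩ := Finite.exists_ne_map_eq_of_infinite
    fun i (t : Set.Ico 0 m) => (⟨f i t, hfs i t⟩ : s)
  have hcol : f a = f b := funext fun j => by
    have := congrArg Subtype.val (congrFun hrestr ⟨toIcoMod hm 0 j, toIcoMod_mem_Ico' hm j⟩)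
    simpa only [toIcoMod, (hf _).sub_zsmul_eq] using this
  rcases hab.lt_or_gt with hlt | hgt
  · exact ⟨a, b - a, by omega, by rw [add_sub_cancel, hcol]⟩
  · exact ⟨b, a - b, by omega, by rw [add_sub_cancel, hcol]⟩

namespace IsTiling

variable {C : Type} {τ : Set (WangTile C)} {f : ℤ → ℤ → WangTile C}

theorem comp_toIcoMod_right (hf : IsTiling τ f) {m : ℤ} (hm : 0 < m) {j₀ : ℤ}
    (hrow : ∀ i, f i (j₀ + m) = f i j₀) : IsTiling τ fun i j => f i (toIcoMod hm j₀ j) :=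
  ⟨fun _ _ => hf.1 _ _, fun _ _ => hf.2.1 _ _,
    fun i j => rel_toIcoMod_add_one (fun x y => x.n = y.s) (f i) (hf.2.2 i) hm (hrow i) j⟩

theorem comp_toIcoMod_left (hf : IsTiling τ f) {q : ℤ} (hq : 0 < q) {a : ℤ}
    (hcol : ∀ j, f (a + q) j = f a j) : IsTiling τ fun i j => f (toIcoMod hq a i) j :=
  ⟨fun _ _ => hf.1 _ _,
    fun i j => rel_toIcoMod_add_one (fun x y => x.e = y.w) (f · j) (hf.2.1 · j) hq (hcol j) i,
    fun _ _ => hf.2.2 _ _⟩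

end IsTiling

theorem stmt11_general {C : Type} (τ : Finset (WangTile C))
    (f : ℤ → ℤ → WangTile C) (hf : IsTiling (↑τ : Set (WangTile C)) f)
    (j₀ m : ℤ) (hm : 0 < m)
    (hrows : ∀ i, f i (j₀ + m) = f i j₀) :
    ∃ (g : ℤ → ℤ → WangTile C) (q : ℤ), IsTiling (↑τ : Set (WangTile C)) g ∧
      0 < q ∧ ∀ i j, g (i + q) j = g i j ∧ g i (j + q) = g i j := by
  set f' := fun i j => f i (toIcoMod hm j₀ j)
  have hf' : IsTiling τ f' := hf.comp_toIcoMod_right hm hrows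
  have hvert : ∀ i, Function.Periodic (f' i) m := fun i => (toIcoMod_periodic hm j₀).comp (f i)
  obtain ⟨a, q, hq, hcol⟩ := exists_add_eq_of_periodic τ.finite_toSet hf'.1 hm hvert
  refine ⟨fun i j => f' (toIcoMod hq a i) j, q * m, hf'.comp_toIcoMod_left hq (congrFun hcol),
    mul_pos hq hm, fun i j => ⟨?_, ?_⟩⟩
  · exact congrArg (f' · j) (by simpa [mul_comm] using (toIcoMod_periodic hq a).int_mul m i)
  · exact (hvert _).int_mul q j

theorem stmt11 {C : Type} [Fintype C] (τ : Finset (WangTile C))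
    (f : ℤ → ℤ → WangTile C) (hf : IsTiling (↑τ : Set (WangTile C)) f)
    (j₀ p m : ℤ) (hp : 0 < p) (hm : 0 < m)
    (hper : ∀ i, f (i + p) j₀ = f i j₀)
    (hrows : ∀ i, f i (j₀ + m) = f i j₀) :
    ∃ (g : ℤ → ℤ → WangTile C) (q : ℤ), IsTiling (↑τ : Set (WangTile C)) g ∧
      0 < q ∧ ∀ i j, g (i + q) j = g i j ∧ g i (j + q) = g i j :=
  stmt11_general τ f hf j₀ m hm hrows
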